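/- arXiv:2310.14012 — 9 statements merged into one kernel-verified Lean document; each statement's English description precedes it below -/
import Mathlib

section
/- Let G be a 4×4 complex Hermitian positive semidefinite matrix indexed by (Fin 2) × (Fin 2) (the first index labeling two spatial points, the second labeling two polarization components). Suppose there exists a nonzero vector P ∈ ℂ² (a polarization projection) such that the projected 2×2 spatial coherence matrix M, defined by M k l = ∑_{i,j} conj(P i) * G (k,i) (l,j) * P j, has rank at most 1 (i.e., the projected field is spatially fully coherent). Then the rank of G is at most 3. -/
/-!
A nonzero vector `v` in the kernel of the projected matrix `M = projMat G P` lifts to the vector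
`w (k, i) = v k * P i`, whose `G`-quadratic form equals the `M`-quadratic form of `v`, namely `0`.
Since `G` is positive semidefinite, `G w = 0`, so `G` has a nontrivial kernel and cannot have
full rank `4`.
-/

open Matrix Kronecker ComplexOrder

noncomputable def projMat (G : Matrix (Fin 2 × Fin 2) (Fin 2 × Fin 2) ℂ) (P : Fin 2 → ℂ) :
    Matrix (Fin 2) (Fin 2) ℂ :=
  Matrix.of fun k l => ∑ i, ∑ j, (starRingEnd ℂ) (P i) * G (k, i) (l, j) * P j

namespace Matrix

theorem rank_lt_card_iff_exists_mulVec_eq_zero {m n K : Type*} [Fintype m] [Fintype n] [Field K]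
    (A : Matrix m n K) : A.rank < Fintype.card n ↔ ∃ v ≠ 0, A *ᵥ v = 0 := by
  have hdim : A.rank + Module.finrank K (LinearMap.ker A.mulVecLin) = Fintype.card n := by
    simpa [Matrix.rank] using LinearMap.finrank_range_add_finrank_ker A.mulVecLin
  have hker : (∃ v ≠ 0, A *ᵥ v = 0) ↔ LinearMap.ker A.mulVecLin ≠ ⊥ := by
    simp [Submodule.ne_bot_iff, and_comm]
  rw [hker, Ne, ← Submodule.finrank_eq_zero]
  omega

end Matrix

theorem prod_mul_ne_zero {m n R : Type*} [MulZeroClass R] [NoZeroDivisors R] {v : m → R}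
    {P : n → R} (hv : v ≠ 0) (hP : P ≠ 0) : (fun p : m × n => v p.1 * P p.2) ≠ 0 := by
  obtain ⟨k, hk⟩ := Function.ne_iff.mp hv
  obtain ⟨i, hi⟩ := Function.ne_iff.mp hP
  exact Function.ne_iff.mpr ⟨(k, i), mul_ne_zero hk hi⟩

theorem dotProduct_projMat_mulVec (G : Matrix (Fin 2 × Fin 2) (Fin 2 × Fin 2) ℂ)
    (P v : Fin 2 → ℂ) :
    star v ⬝ᵥ projMat G P *ᵥ v =
      star (fun p => v p.1 * P p.2) ⬝ᵥ G *ᵥ (fun p => v p.1 * P p.2) := by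
  simp only [dotProduct, mulVec, projMat, of_apply, Pi.star_apply, star_mul', RCLike.star_def,
    Fintype.sum_prod_type, Finset.mul_sum, Finset.sum_mul]
  refine Finset.sum_congr rfl fun k _ => ?_
  rw [Finset.sum_comm]
  refine Finset.sum_congr rfl fun l _ => Finset.sum_congr rfl fun i _ =>
    Finset.sum_congr rfl fun j _ => ?_
  ring

/-- If a Hermitian positive semidefinite 4×4 coherence matrix admits a nonzero polarization
projection along which the projected spatial coherence matrix has rank at most 1
(spatial full coherence), then the rank of `G` is at most 3. -/
theorem rank_le_three_of_projection_coherent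
    (G : Matrix (Fin 2 × Fin 2) (Fin 2 × Fin 2) ℂ) (hG : G.PosSemidef)
    (P : Fin 2 → ℂ) (hP : P ≠ 0)
    (hcoh : (projMat G P).rank ≤ 1) :
    G.rank ≤ 3 := by
  obtain ⟨v, hv, hMv⟩ := ((projMat G P).rank_lt_card_iff_exists_mulVec_eq_zero).mp <| by
    simp only [Fintype.card_fin]; omega
  have hGw : G *ᵥ (fun p => v p.1 * P p.2) = 0 := by
    rw [← hG.dotProduct_mulVec_zero_iff, ← dotProduct_projMat_mulVec, hMv, dotProduct_zero]
  have hrank := G.rank_lt_card_iff_exists_mulVec_eq_zero.mpr ⟨_, prod_mul_ne_zero hv hP, hGw⟩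
  simp only [Fintype.card_prod, Fintype.card_fin] at hrank
  omega
end

section
/- Let G be a 4×4 complex Hermitian positive semidefinite matrix indexed by (Fin 2) × (Fin 2) (spatial point index first, polarization index second). Suppose there exist two nonzero vectors P, Q ∈ ℂ² with ⟨P, Q⟩ = 0 (orthogonal polarization projections) such that both projected 2×2 spatial coherence matrices M_P and M_Q, where M_P k l = ∑_{i,j} conj(P i) * G (k,i) (l,j) * P j and similarly for Q, have rank at most 1. Then the rank of G is at most 2. -/
/-!
Write `G = Bᴴ B`. For a polarization vector `P`, the matrix `kronCol P` of `x ↦ x ⊗ P` satisfies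
`M_P = (kronCol P)ᴴ G (kronCol P) = (B kronCol P)ᴴ (B kronCol P)`, so
`rank (G kronCol P) ≤ rank (B kronCol P) = rank M_P ≤ 1`. Since `P, Q` is an orthogonal basis
of `ℂ²`, the projections `kronCol P (kronCol P)ᴴ / ‖P‖²` and `kronCol Q (kronCol Q)ᴴ / ‖Q‖²`
add up to the identity, which splits `G` into two summands `G kronCol P (⋯)` and
`G kronCol Q (⋯)` of rank at most one.
-/

open Matrix Kronecker ComplexOrder

namespace Matrix

variable {l m n o K : Type*} [Fintype n] [Field K]

theorem rank_add_le [Fintype m] (A B : Matrix m n K) : (A + B).rank ≤ A.rank + B.rank := by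
  have hrange : LinearMap.range (A + B).mulVecLin ≤
      LinearMap.range A.mulVecLin ⊔ LinearMap.range B.mulVecLin := by
    rintro _ ⟨v, rfl⟩
    exact Submodule.mem_sup.mpr ⟨A *ᵥ v, ⟨v, rfl⟩, B *ᵥ v, ⟨v, rfl⟩, (add_mulVec A B v).symm⟩
  exact (Submodule.finrank_mono hrange).trans (Submodule.finrank_add_le_finrank_add_finrank _ _)

theorem rank_le_rank_mul_add_rank_mul [Fintype m] [Fintype l] [Fintype o] [DecidableEq n]
    {A : Matrix n l K} {A' : Matrix l n K} {B : Matrix n o K} {B' : Matrix o n K}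
    (h : A * A' + B * B' = 1) (G : Matrix m n K) : G.rank ≤ (G * A).rank + (G * B).rank :=
  calc G.rank = (G * A * A' + G * B * B').rank := by
        rw [Matrix.mul_assoc, Matrix.mul_assoc, ← Matrix.mul_add, h, Matrix.mul_one]
    _ ≤ (G * A * A').rank + (G * B * B').rank := rank_add_le _ _
    _ ≤ (G * A).rank + (G * B).rank := add_le_add (rank_mul_le_left _ _) (rank_mul_le_left _ _)

theorem PosSemidef.rank_mul_le_rank_conjTranspose_mul_mul {𝕜 : Type*} [RCLike 𝕜] [Fintype m]
    {G : Matrix n n 𝕜} (hG : G.PosSemidef) (A : Matrix n m 𝕜) :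
    (G * A).rank ≤ (Aᴴ * G * A).rank := by
  classical
  open scoped MatrixOrder in
  obtain ⟨B, rfl⟩ := CStarAlgebra.nonneg_iff_eq_star_mul_self.mp hG.nonneg
  calc (star B * B * A).rank ≤ (B * A).rank := by
        rw [Matrix.mul_assoc]; exact rank_mul_le_right _ _
    _ = ((B * A)ᴴ * (B * A)).rank := (rank_conjTranspose_mul_self _).symm
    _ = (Aᴴ * (star B * B) * A).rank := by
        simp only [conjTranspose_mul, star_eq_conjTranspose, Matrix.mul_assoc]

variable [DecidableEq n] [StarRing K]

theorem sum_inv_smul_vecMulVec_eq_one (v : n → n → K) (hv : ∀ k, star (v k) ⬝ᵥ v k ≠ 0)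
    (horth : Pairwise fun k k' => star (v k) ⬝ᵥ v k' = 0) :
    ∑ k, (star (v k) ⬝ᵥ v k)⁻¹ • vecMulVec (v k) (star (v k)) = 1 := by
  set M : Matrix n n K := (of v)ᵀ
  set D : Matrix n n K := diagonal fun k => (star (v k) ⬝ᵥ v k)⁻¹
  have hgram : Mᴴ * M = diagonal fun k => star (v k) ⬝ᵥ v k := by
    ext k k'
    rcases eq_or_ne k k' with rfl | hkk'
    · simp [M, mul_apply, dotProduct]
    · simpa [M, mul_apply, dotProduct, hkk'] using horth hkk'
  have hleft : D * Mᴴ * M = 1 := by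
    rw [Matrix.mul_assoc, hgram, diagonal_mul_diagonal, ← diagonal_one]
    exact congrArg diagonal (funext fun k => inv_mul_cancel₀ (hv k))
  calc ∑ k, (star (v k) ⬝ᵥ v k)⁻¹ • vecMulVec (v k) (star (v k)) = M * (D * Mᴴ) := by
        ext i j
        rw [Matrix.sum_apply, mul_apply]
        refine Finset.sum_congr rfl fun k _ => ?_
        simp only [M, D, Matrix.smul_apply, vecMulVec_apply, diagonal_mul, transpose_apply,
          conjTranspose_apply, of_apply, Pi.star_apply, smul_eq_mul]
        ring
    _ = 1 := mul_eq_one_comm.mp hleft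

theorem inv_smul_vecMulVec_add_inv_smul_vecMulVec_eq_one {P Q : Fin 2 → K}
    (hP : star P ⬝ᵥ P ≠ 0) (hQ : star Q ⬝ᵥ Q ≠ 0) (horth : star P ⬝ᵥ Q = 0) :
    (star P ⬝ᵥ P)⁻¹ • vecMulVec P (star P) + (star Q ⬝ᵥ Q)⁻¹ • vecMulVec Q (star Q) = 1 := by
  have hQP : star Q ⬝ᵥ P = 0 := by rw [star_dotProduct, horth, star_zero]
  have hpair : Pairwise fun k k' => star (![P, Q] k) ⬝ᵥ ![P, Q] k' = 0 := by
    intro k k' hkk'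
    fin_cases k <;> fin_cases k' <;> first | exact absurd rfl hkk' | assumption
  have h := sum_inv_smul_vecMulVec_eq_one ![P, Q] (Fin.forall_fin_two.mpr ⟨hP, hQ⟩) hpair
  rwa [Fin.sum_univ_two, Matrix.cons_val_zero, Matrix.cons_val_one] at h

end Matrix

def kronCol (ι : Type*) {κ R : Type*} [DecidableEq ι] [Zero R] (P : κ → R) :
    Matrix (ι × κ) ι R :=
  of fun p l => if p.1 = l then P p.2 else 0

theorem kronCol_mul_conjTranspose {ι κ R : Type*} [Fintype ι] [DecidableEq ι] [Semiring R]
    [StarRing R] (P : κ → R) :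
    kronCol ι P * (kronCol ι P)ᴴ = (1 : Matrix ι ι R) ⊗ₖ vecMulVec P (star P) := by
  ext ⟨k, i⟩ ⟨l, j⟩
  rcases eq_or_ne k l with rfl | hkl
  · simp [kronCol, mul_apply, vecMulVec_apply]
  · simp [kronCol, mul_apply, one_apply, hkl, hkl.symm]

theorem projMat_eq_conjTranspose_kronCol_mul (G : Matrix (Fin 2 × Fin 2) (Fin 2 × Fin 2) ℂ)
    (P : Fin 2 → ℂ) : projMat G P = (kronCol (Fin 2) P)ᴴ * G * kronCol (Fin 2) P := by
  ext k l
  simp only [projMat, kronCol, mul_apply, conjTranspose_apply, of_apply, Fintype.sum_prod_type,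
    apply_ite (starRingEnd ℂ), map_zero, RCLike.star_def, ite_mul, zero_mul, Finset.sum_mul,
    mul_ite, mul_zero]
  rw [Finset.sum_comm]
  simp only [Finset.sum_ite_irrel, Finset.sum_const_zero, Finset.sum_ite_eq', Finset.mem_univ,
    if_true]

/-- If a Hermitian positive semidefinite 4×4 coherence matrix admits two nonzero, mutually
orthogonal polarization projections along each of which the projected spatial coherence matrix
has rank at most 1 (spatial full coherence), then the rank of `G` is at most 2. -/
theorem rank_le_two_of_two_orthogonal_projections_coherent
    (G : Matrix (Fin 2 × Fin 2) (Fin 2 × Fin 2) ℂ) (hG : G.PosSemidef)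
    (P Q : Fin 2 → ℂ) (hP : P ≠ 0) (hQ : Q ≠ 0)
    (horth : star P ⬝ᵥ Q = 0)
    (hcohP : (projMat G P).rank ≤ 1) (hcohQ : (projMat G Q).rank ≤ 1) :
    G.rank ≤ 2 := by
  have hres : kronCol (Fin 2) P * ((star P ⬝ᵥ P)⁻¹ • (kronCol (Fin 2) P)ᴴ) +
      kronCol (Fin 2) Q * ((star Q ⬝ᵥ Q)⁻¹ • (kronCol (Fin 2) Q)ᴴ) = 1 := by
    rw [Matrix.mul_smul, Matrix.mul_smul, kronCol_mul_conjTranspose, kronCol_mul_conjTranspose,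
      ← kronecker_smul, ← kronecker_smul, ← kronecker_add,
      inv_smul_vecMulVec_add_inv_smul_vecMulVec_eq_one (dotProduct_star_self_eq_zero.not.mpr hP)
        (dotProduct_star_self_eq_zero.not.mpr hQ) horth, one_kronecker_one]
  calc G.rank ≤ (G * kronCol (Fin 2) P).rank + (G * kronCol (Fin 2) Q).rank :=
        rank_le_rank_mul_add_rank_mul hres G
    _ ≤ (projMat G P).rank + (projMat G Q).rank := by
        rw [projMat_eq_conjTranspose_kronCol_mul, projMat_eq_conjTranspose_kronCol_mul]
        exact add_le_add (hG.rank_mul_le_rank_conjTranspose_mul_mul _)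
          (hG.rank_mul_le_rank_conjTranspose_mul_mul _)
    _ ≤ 2 := by omega
end

section
/- Let G be a 4×4 complex Hermitian positive semidefinite matrix indexed by (Fin 2) × (Fin 2) with rank exactly 3. Then for every 4×4 unitary matrix U and for all 2×2 complex matrices A and B, U G Uᴴ ≠ A ⊗ B. That is, a rank-3 coherence matrix can never be rendered separable with respect to its two degrees of freedom by any global unitary transformation. -/
open Matrix Kronecker ComplexOrder

/-! Rank is multiplicative under Kronecker products and invariant under unitary conjugation, so
`U G Uᴴ = A ⊗ B` would give `rank A * rank B = 3` with both factors at most `2`. -/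

open Module LinearMap in
theorem TensorProduct.finrank_range_map {K M N P Q : Type*} [Field K]
    [AddCommGroup M] [AddCommGroup N] [AddCommGroup P] [AddCommGroup Q]
    [Module K M] [Module K N] [Module K P] [Module K Q] (f : M →ₗ[K] P) (g : N →ₗ[K] Q) :
    finrank K (range (map f g)) = finrank K (range f) * finrank K (range g) := by
  rw [range_map, ← range_mapIncl,
    finrank_range_of_inj (Module.Flat.tensorProduct_mapIncl_injective_of_right _ _),
    finrank_tensorProduct]

theorem Matrix.rank_kronecker {K m n p q : Type*} [Field K] [Fintype m] [Fintype n] [Fintype p]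
    [Fintype q] [DecidableEq n] [DecidableEq q] (A : Matrix m n K) (B : Matrix p q K) :
    (A ⊗ₖ B).rank = A.rank * B.rank := by
  rw [rank_eq_finrank_range_toLin _ ((Pi.basisFun K m).tensorProduct (Pi.basisFun K p))
      ((Pi.basisFun K n).tensorProduct (Pi.basisFun K q)), toLin_kronecker,
    TensorProduct.finrank_range_map, ← rank_eq_finrank_range_toLin,
    ← rank_eq_finrank_range_toLin]

theorem Matrix.rank_mul_mul_conjTranspose_of_mul_conjTranspose_eq_one {R n : Type*} [CommRing R]
    [StarRing R] [Fintype n] [DecidableEq n] {U : Matrix n n R} (hU : U * Uᴴ = 1)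
    (G : Matrix n n R) : (U * G * Uᴴ).rank = G.rank := by
  rw [rank_mul_eq_left_of_isUnit_det _ _ (isUnit_det_of_left_inverse hU),
    rank_mul_eq_right_of_isUnit_det _ _ (isUnit_det_of_right_inverse hU)]

theorem rank_three_not_unitarily_separable_general
    (G : Matrix (Fin 2 × Fin 2) (Fin 2 × Fin 2) ℂ)
    (hrank : G.rank = 3) :
    ∀ U : Matrix (Fin 2 × Fin 2) (Fin 2 × Fin 2) ℂ, U * Uᴴ = 1 →
      ∀ A B : Matrix (Fin 2) (Fin 2) ℂ, U * G * Uᴴ ≠ A ⊗ₖ B := by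
  intro U hU A B hsep
  have hprod : A.rank * B.rank = 3 := by
    rw [← rank_kronecker, ← hsep, rank_mul_mul_conjTranspose_of_mul_conjTranspose_eq_one hU, hrank]
  have hA : A.rank ≤ 2 := by simpa using A.rank_le_card_width
  have hB : B.rank ≤ 2 := by simpa using B.rank_le_card_width
  interval_cases A.rank <;> interval_cases B.rank <;> omega

/-- A rank-3 Hermitian positive semidefinite 4×4 coherence matrix can never be rendered
separable (equal to a Kronecker product of 2×2 matrices) by any global unitary. -/
theorem rank_three_not_unitarily_separable
    (G : Matrix (Fin 2 × Fin 2) (Fin 2 × Fin 2) ℂ) (hG : G.PosSemidef)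
    (hrank : G.rank = 3) :
    ∀ U : Matrix (Fin 2 × Fin 2) (Fin 2 × Fin 2) ℂ, U * Uᴴ = 1 →
      ∀ A B : Matrix (Fin 2) (Fin 2) ℂ, U * G * Uᴴ ≠ A ⊗ₖ B :=
  rank_three_not_unitarily_separable_general G hrank
end

section
/- Let G be a 4×4 complex Hermitian positive semidefinite matrix indexed by (Fin 2) × (Fin 2) with trace 1 and rank at most 2, and let λ₁ ≥ λ₂ ≥ 0 be its two largest eigenvalues (so λ₁ + λ₂ = 1). Then there exists a 4×4 unitary matrix U such that U G Uᴴ = (diagonal matrix with entries 1, 0) ⊗ (diagonal matrix with entries λ₁, λ₂), the Kronecker product of a rank-one 2×2 projector and a 2×2 diagonal positive semidefinite trace-1 matrix. In particular, every rank-2 coherence matrix can be rendered separable by a global unitary. -/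
open Matrix Kronecker ComplexOrder

/-! A Hermitian matrix is unitarily equivalent to any real diagonal matrix with the same
multiset of eigenvalues: diagonalize it by its eigenvector unitary, then reorder the eigenbasis
by a permutation matrix matching the two lists of values fiber by fiber. The target
`diag{1,0} ⊗ diag{l1,l2}` is itself diagonal, with entries `l1, l2, 0, 0`. -/

theorem Equiv.exists_comp_eq_of_map_univ_eq {α β γ : Type*} [Fintype α] [Fintype β]
    [DecidableEq γ] {f : α → γ} {g : β → γ}
    (h : Finset.univ.val.map f = Finset.univ.val.map g) : ∃ e : α ≃ β, g ∘ e = f := by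
  classical
  have hfiber (c : γ) : Fintype.card {a // f a = c} = Fintype.card {b // g b = c} := by
    have := congrArg (Multiset.count c) h
    simp only [Multiset.count_map] at this
    simpa [Fintype.card_subtype, Finset.card_def, Finset.filter_val, eq_comm] using this
  exact ⟨Equiv.ofFiberEquiv fun c ↦ Fintype.equivOfCardEq (hfiber c),
    funext <| Equiv.ofFiberEquiv_map _⟩

namespace Matrix

variable {n R : Type*} [Fintype n] [DecidableEq n]

theorem permMatrix_mul_mul_conjTranspose_permMatrix [NonAssocSemiring R] [StarRing R]
    (σ : Equiv.Perm n) (M : Matrix n n R) :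
    σ.permMatrix R * M * (σ.permMatrix R)ᴴ = M.submatrix σ σ := by
  rw [conjTranspose_permMatrix, PEquiv.toMatrix_toPEquiv_mul, PEquiv.mul_toMatrix_toPEquiv]
  rfl

theorem permMatrix_mem_unitaryGroup [CommRing R] [StarRing R] (σ : Equiv.Perm n) :
    σ.permMatrix R ∈ unitaryGroup n R := by
  rw [mem_unitaryGroup_iff, star_eq_conjTranspose, conjTranspose_permMatrix, ← permMatrix_mul,
    inv_mul_cancel, permMatrix_one]

theorem IsHermitian.exists_unitary_conj_eq_diagonal {𝕜 : Type*} [RCLike 𝕜]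
    {A : Matrix n n 𝕜} (hA : A.IsHermitian) {d : n → ℝ}
    (hd : Finset.univ.val.map hA.eigenvalues = Finset.univ.val.map d) :
    ∃ U ∈ unitaryGroup n 𝕜, U * A * Uᴴ = diagonal (RCLike.ofReal ∘ d) := by
  obtain ⟨σ, hσ⟩ := Equiv.exists_comp_eq_of_map_univ_eq hd.symm
  have hV := hA.conjStarAlgAut_star_eigenvectorUnitary
  rw [Unitary.conjStarAlgAut_star_apply] at hV
  set V : Matrix n n 𝕜 := ↑hA.eigenvectorUnitary
  set P := Equiv.Perm.permMatrix 𝕜 σ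
  refine ⟨P * star V, Submonoid.mul_mem _ (permMatrix_mem_unitaryGroup σ)
    (Unitary.star_mem hA.eigenvectorUnitary.2), ?_⟩
  calc P * star V * A * (P * star V)ᴴ = P * (star V * A * V) * Pᴴ := by
        simp only [← star_eq_conjTranspose, star_mul, star_star, Matrix.mul_assoc]
    _ = diagonal (RCLike.ofReal ∘ d) := by
        rw [hV, permMatrix_mul_mul_conjTranspose_permMatrix, submatrix_diagonal_equiv, ← hσ]
        rfl

end Matrix

theorem rank_two_unitarily_separable_general
    (G : Matrix (Fin 2 × Fin 2) (Fin 2 × Fin 2) ℂ) (hG : G.PosSemidef)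
    (l1 l2 : ℝ)
    (heig : Finset.univ.val.map hG.isHermitian.eigenvalues = ({l1, l2, 0, 0} : Multiset ℝ)) :
    ∃ U : Matrix (Fin 2 × Fin 2) (Fin 2 × Fin 2) ℂ, U * Uᴴ = 1 ∧
      U * G * Uᴴ =
        Matrix.diagonal ![(1 : ℂ), 0] ⊗ₖ Matrix.diagonal ![(l1 : ℂ), (l2 : ℂ)] := by
  set d : Fin 2 × Fin 2 → ℝ := fun p ↦ ![1, 0] p.1 * ![l1, l2] p.2
  have hd : Finset.univ.val.map d = ({l1, l2, 0, 0} : Multiset ℝ) := by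
    simp [d, ← Finset.univ_product_univ, Finset.product_val, Fin.univ_succ, Multiset.cons_swap l2]
  obtain ⟨U, hU, hUG⟩ := hG.isHermitian.exists_unitary_conj_eq_diagonal (heig.trans hd.symm)
  refine ⟨U, mem_unitaryGroup_iff.mp hU, ?_⟩
  rw [hUG, diagonal_kronecker_diagonal]
  congr 1
  funext p
  fin_cases p <;> simp [d]

/-- Every rank-≤2, trace-1, Hermitian positive semidefinite 4×4 coherence matrix with
(largest) eigenvalues `l1 ≥ l2 ≥ 0` (the remaining eigenvalues vanishing) can be brought by a
global unitary to the separable form `diag{1,0} ⊗ diag{l1,l2}`. -/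
theorem rank_two_unitarily_separable
    (G : Matrix (Fin 2 × Fin 2) (Fin 2 × Fin 2) ℂ) (hG : G.PosSemidef)
    (htr : G.trace = 1) (hrank : G.rank ≤ 2)
    (l1 l2 : ℝ) (h21 : l2 ≤ l1) (h2 : 0 ≤ l2) (hsum : l1 + l2 = 1)
    (heig : Finset.univ.val.map hG.isHermitian.eigenvalues = ({l1, l2, 0, 0} : Multiset ℝ)) :
    ∃ U : Matrix (Fin 2 × Fin 2) (Fin 2 × Fin 2) ℂ, U * Uᴴ = 1 ∧
      U * G * Uᴴ =
        Matrix.diagonal ![(1 : ℂ), 0] ⊗ₖ Matrix.diagonal ![(l1 : ℂ), (l2 : ℂ)] :=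
  rank_two_unitarily_separable_general G hG l1 l2 heig
end

section
/- Let G be a 4×4 complex Hermitian positive semidefinite matrix indexed by (Fin 2) × (Fin 2) with trace 1, and let λ₁ ≥ λ₂ ≥ λ₃ ≥ λ₄ ≥ 0 be its eigenvalues listed in decreasing order. Then there exist a 4×4 unitary matrix U and 2×2 Hermitian positive semidefinite trace-1 matrices A and B with U G Uᴴ = A ⊗ B if and only if λ₁ λ₄ = λ₂ λ₃. -/
open Matrix Kronecker ComplexOrder Polynomial

/-!
Both sides only depend on the spectrum, since a Hermitian matrix is unitarily equivalent to
`diagonal d` exactly when `d` lists its eigenvalues. If `U G Uᴴ = A ⊗ B`, diagonalising `A` and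
`B` with decreasing spectra `a₁ ≥ a₂ ≥ 0`, `b₁ ≥ b₂ ≥ 0` shows that the spectrum of `G` is
`{aᵢ bⱼ}`: its extreme elements are `a₁ b₁` and `a₂ b₂`, and the middle two are `a₁ b₂` and
`a₂ b₁` in some order, so `λ₁ λ₄ = λ₂ λ₃`. Conversely, if `λ₁ λ₄ = λ₂ λ₃` and the `λᵢ` sum to `1`,
the array `[[λ₁, λ₂], [λ₃, λ₄]]` has rank one and is the outer product of its row sums
`(λ₁ + λ₂, λ₃ + λ₄)` and column sums `(λ₁ + λ₃, λ₂ + λ₄)`, so `G` is unitarily equivalent to the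
Kronecker product of these two diagonal matrices.
-/

theorem Fintype.exists_perm_comp_eq_iff_map_univ_eq {ι α : Type*} [Fintype ι] (f g : ι → α) :
    (∃ σ : Equiv.Perm ι, f ∘ σ = g) ↔ Finset.univ.val.map f = Finset.univ.val.map g := by
  classical
  constructor
  · rintro ⟨σ, rfl⟩
    rw [← Multiset.map_map, Multiset.map_univ_val_equiv]
  · intro h
    have hcard (a : α) : Fintype.card {i // g i = a} = Fintype.card {i // f i = a} := by
      have := congrArg (Multiset.count a) h
      simp only [Multiset.count_map] at this
      simpa [Fintype.card_subtype, Finset.card, Finset.filter_val, eq_comm] using this.symm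
    exact ⟨Equiv.ofFiberEquiv fun a => Fintype.equivOfCardEq (hcard a),
      funext (Equiv.ofFiberEquiv_map _)⟩

theorem Fin.exists_perm_antitone_comp {α : Type*} [LinearOrder α] {m : ℕ} (f : Fin m → α) :
    ∃ σ : Equiv.Perm (Fin m), Antitone (f ∘ σ) :=
  ⟨Fin.revPerm.trans (Tuple.sort f),
    (Tuple.monotone_sort f).comp_antitone fun _ _ => Fin.rev_le_rev.mpr⟩

namespace Matrix

theorem kronecker_conj_kronecker {m n R : Type*} [Fintype m] [Fintype n] [CommRing R]
    [StarRing R] (U A : Matrix m m R) (V B : Matrix n n R) :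
    (U ⊗ₖ V) * (A ⊗ₖ B) * (U ⊗ₖ V)ᴴ = (U * A * Uᴴ) ⊗ₖ (V * B * Vᴴ) := by
  rw [conjTranspose_kronecker, ← mul_kronecker_mul, ← mul_kronecker_mul]

variable {n : Type*} [Fintype n] [DecidableEq n]

theorem charpoly_conj_of_conjTranspose_mul_self {R : Type*} [CommRing R] [StarRing R]
    {U : Matrix n n R} (hU : Uᴴ * U = 1) (M : Matrix n n R) :
    (U * M * Uᴴ).charpoly = M.charpoly := by
  rw [charpoly_mul_comm, ← Matrix.mul_assoc, hU, Matrix.one_mul]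

variable {𝕜 : Type*} [RCLike 𝕜]

theorem IsHermitian.exists_unitary_conj_eq_diagonal_iff {M : Matrix n n 𝕜} (hM : M.IsHermitian)
    (d : n → ℝ) :
    (∃ U : Matrix n n 𝕜, U * Uᴴ = 1 ∧ U * M * Uᴴ = diagonal (RCLike.ofReal ∘ d)) ↔
      Finset.univ.val.map hM.eigenvalues = Finset.univ.val.map d := by
  constructor
  · rintro ⟨U, hU, hUM⟩
    have hroots : M.charpoly.roots = Finset.univ.val.map (RCLike.ofReal ∘ d) := by
      rw [← charpoly_conj_of_conjTranspose_mul_self (mul_eq_one_comm.mp hU) M, hUM,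
        charpoly_diagonal,
        roots_prod _ _ (Finset.prod_ne_zero_iff.mpr fun i _ => X_sub_C_ne_zero _)]
      simp
    rw [hM.roots_charpoly_eq_eigenvalues, ← Multiset.map_map, ← Multiset.map_map] at hroots
    exact Multiset.map_injective RCLike.ofReal_injective hroots
  · intro h
    obtain ⟨σ, rfl⟩ := (Fintype.exists_perm_comp_eq_iff_map_univ_eq _ _).mpr h
    set V : Matrix n n 𝕜 := ↑hM.eigenvectorUnitary
    have hV : Vᴴ * V = 1 := Unitary.coe_star_mul_self hM.eigenvectorUnitary
    have hdiag : Vᴴ * M * V = diagonal (RCLike.ofReal ∘ hM.eigenvalues) := by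
      simpa [Unitary.conjStarAlgAut_star_apply, V, star_eq_conjTranspose] using
        hM.conjStarAlgAut_star_eigenvectorUnitary
    have hconj (N : Matrix n n 𝕜) :
        Vᴴ.submatrix σ id * N * (Vᴴ.submatrix σ id)ᴴ = (Vᴴ * N * V).submatrix σ σ := by
      rw [conjTranspose_submatrix, conjTranspose_conjTranspose,
        submatrix_mul _ _ _ _ _ Function.bijective_id,
        submatrix_mul _ _ _ _ _ Function.bijective_id, submatrix_id_id]
    refine ⟨Vᴴ.submatrix σ id, ?_, ?_⟩
    · simpa only [Matrix.mul_one, hV, submatrix_one_equiv] using hconj 1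
    · rw [hconj, hdiag, submatrix_diagonal_equiv]
      rfl

theorem IsHermitian.sum_map_eigenvalues_eq_re_trace {M : Matrix n n 𝕜} (hM : M.IsHermitian) :
    (Finset.univ.val.map hM.eigenvalues).sum = RCLike.re M.trace := by
  simp [hM.trace_eq_sum_eigenvalues]

theorem trace_diagonal_ofReal_eq_one {d : n → ℝ} (hd : ∑ i, d i = 1) :
    (diagonal (RCLike.ofReal ∘ d) : Matrix n n 𝕜).trace = 1 := by
  simp [trace_diagonal, ← RCLike.ofReal_sum, hd]

omit [Fintype n] in
theorem posSemidef_diagonal_ofReal {d : n → ℝ} (hd : 0 ≤ d) :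
    (diagonal (RCLike.ofReal ∘ d) : Matrix n n 𝕜).PosSemidef :=
  posSemidef_diagonal_iff.mpr fun i => RCLike.ofReal_nonneg.mpr (hd i)

theorem PosSemidef.exists_unitary_conj_eq_diagonal_antitone {k : ℕ}
    {A : Matrix (Fin k) (Fin k) 𝕜} (hA : A.PosSemidef) :
    ∃ d : Fin k → ℝ, Antitone d ∧ 0 ≤ d ∧
      ∃ U : Matrix (Fin k) (Fin k) 𝕜, U * Uᴴ = 1 ∧ U * A * Uᴴ = diagonal (RCLike.ofReal ∘ d) := by
  obtain ⟨σ, hσ⟩ := Fin.exists_perm_antitone_comp hA.isHermitian.eigenvalues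
  refine ⟨_, hσ, fun i => hA.eigenvalues_nonneg _,
    (hA.isHermitian.exists_unitary_conj_eq_diagonal_iff _).mpr ?_⟩
  exact (Fintype.exists_perm_comp_eq_iff_map_univ_eq _ _).mp ⟨σ, rfl⟩

theorem IsHermitian.map_eigenvalues_of_unitary_conj_eq_kronecker {k l : ℕ}
    {G U : Matrix (Fin k × Fin l) (Fin k × Fin l) 𝕜} (hG : G.IsHermitian) (hU : U * Uᴴ = 1)
    {A : Matrix (Fin k) (Fin k) 𝕜} {B : Matrix (Fin l) (Fin l) 𝕜}
    (hA : A.PosSemidef) (hB : B.PosSemidef) (hUG : U * G * Uᴴ = A ⊗ₖ B) :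
    ∃ a : Fin k → ℝ, ∃ b : Fin l → ℝ, Antitone a ∧ 0 ≤ a ∧ Antitone b ∧ 0 ≤ b ∧
      Finset.univ.val.map hG.eigenvalues =
        Finset.univ.val.map fun p : Fin k × Fin l => a p.1 * b p.2 := by
  obtain ⟨a, ha, ha0, V, hV, hVA⟩ := hA.exists_unitary_conj_eq_diagonal_antitone
  obtain ⟨b, hb, hb0, W, hW, hWB⟩ := hB.exists_unitary_conj_eq_diagonal_antitone
  have hconj (N : Matrix (Fin k × Fin l) (Fin k × Fin l) 𝕜) :
      ((V ⊗ₖ W) * U) * N * ((V ⊗ₖ W) * U)ᴴ = (V ⊗ₖ W) * (U * N * Uᴴ) * (V ⊗ₖ W)ᴴ := by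
    simp only [conjTranspose_mul, Matrix.mul_assoc]
  refine ⟨a, b, ha, ha0, hb, hb0, (hG.exists_unitary_conj_eq_diagonal_iff _).mp
    ⟨(V ⊗ₖ W) * U, ?_, ?_⟩⟩
  · have h1 := hconj 1
    rwa [Matrix.mul_one, Matrix.mul_one, hU, ← one_kronecker_one, kronecker_conj_kronecker,
      Matrix.mul_one, Matrix.mul_one, hV, hW, one_kronecker_one] at h1
  · rw [hconj, hUG, kronecker_conj_kronecker, hVA, hWB, diagonal_kronecker_diagonal]
    congr 1
    funext p
    simp

end Matrix

theorem mul_eq_mul_of_map_univ_eq_products {l1 l2 l3 l4 : ℝ}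
    (h21 : l2 ≤ l1) (h32 : l3 ≤ l2) (h43 : l4 ≤ l3) {a b : Fin 2 → ℝ}
    (ha : Antitone a) (ha0 : 0 ≤ a) (hb : Antitone b) (hb0 : 0 ≤ b)
    (h : Finset.univ.val.map (fun p : Fin 2 × Fin 2 => a p.1 * b p.2) = {l1, l2, l3, l4}) :
    l1 * l4 = l2 * l3 := by
  have sortedGE {p q r s : ℝ} (hqp : q ≤ p) (hrq : r ≤ q) (hsr : s ≤ r) :
      [p, q, r, s].SortedGE :=
    List.sortedGE_iff_isChain.mpr (.cons_cons hqp (.cons_cons hrq (.cons_cons hsr (.singleton _))))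
  have hsorted {p q r s : ℝ} (hqp : q ≤ p) (hrq : r ≤ q) (hsr : s ≤ r)
      (hm : ({p, q, r, s} : Multiset ℝ) = {l1, l2, l3, l4}) : [p, q, r, s] = [l1, l2, l3, l4] :=
    (Multiset.coe_eq_coe.mp hm).eq_of_sortedGE (sortedGE hqp hrq hsr) (sortedGE h21 h32 h43)
  have ha01 : a 1 ≤ a 0 := ha (by decide)
  have hb01 : b 1 ≤ b 0 := hb (by decide)
  have h00 : a 0 * b 1 ≤ a 0 * b 0 := mul_le_mul_of_nonneg_left hb01 (ha0 0)
  have h11 : a 1 * b 1 ≤ a 1 * b 0 := mul_le_mul_of_nonneg_left hb01 (ha0 1)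
  have h11' : a 1 * b 1 ≤ a 0 * b 1 := mul_le_mul_of_nonneg_right ha01 (hb0 1)
  have h00' : a 1 * b 0 ≤ a 0 * b 0 := mul_le_mul_of_nonneg_right ha01 (hb0 0)
  have hprod : ({a 0 * b 0, a 0 * b 1, a 1 * b 0, a 1 * b 1} : Multiset ℝ) = {l1, l2, l3, l4} :=
    h
  rcases le_total (a 1 * b 0) (a 0 * b 1) with hmid | hmid
  · have := hsorted h00 hmid h11 hprod
    simp only [List.cons.injEq] at this
    obtain ⟨rfl, rfl, rfl, rfl, -⟩ := this
    ring
  · have hprod' : ({a 0 * b 0, a 1 * b 0, a 0 * b 1, a 1 * b 1} : Multiset ℝ) =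
        {l1, l2, l3, l4} := by
      rw [← hprod]
      exact congrArg (_ ::ₘ ·) (Multiset.cons_swap _ _ _)
    have := hsorted h00' hmid h11' hprod'
    simp only [List.cons.injEq] at this
    obtain ⟨rfl, rfl, rfl, rfl, -⟩ := this
    ring

theorem map_univ_mul_marginals_eq {l1 l2 l3 l4 : ℝ} (hsum : l1 + l2 + l3 + l4 = 1)
    (h : l1 * l4 = l2 * l3) :
    Finset.univ.val.map
        (fun p : Fin 2 × Fin 2 => ![l1 + l2, l3 + l4] p.1 * ![l1 + l3, l2 + l4] p.2) =
      {l1, l2, l3, l4} := by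
  change ({(l1 + l2) * (l1 + l3), (l1 + l2) * (l2 + l4), (l3 + l4) * (l1 + l3),
    (l3 + l4) * (l2 + l4)} : Multiset ℝ) = _
  rw [show (l1 + l2) * (l1 + l3) = l1 by linear_combination l1 * hsum - h,
    show (l1 + l2) * (l2 + l4) = l2 by linear_combination l2 * hsum + h,
    show (l3 + l4) * (l1 + l3) = l3 by linear_combination l3 * hsum + h,
    show (l3 + l4) * (l2 + l4) = l4 by linear_combination l4 * hsum - h]

/-- A trace-1 Hermitian positive semidefinite 4×4 coherence matrix with eigenvalues
`l1 ≥ l2 ≥ l3 ≥ l4 ≥ 0` can be brought by a global unitary to a Kronecker product of two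
2×2 Hermitian positive semidefinite trace-1 matrices iff `l1 l4 = l2 l3`. -/
theorem unitarily_separable_iff_eigenvalue_condition
    (G : Matrix (Fin 2 × Fin 2) (Fin 2 × Fin 2) ℂ) (hG : G.PosSemidef)
    (htr : G.trace = 1)
    (l1 l2 l3 l4 : ℝ) (h21 : l2 ≤ l1) (h32 : l3 ≤ l2) (h43 : l4 ≤ l3) (h4 : 0 ≤ l4)
    (heig : Finset.univ.val.map hG.isHermitian.eigenvalues =
      ({l1, l2, l3, l4} : Multiset ℝ)) :
    (∃ (U : Matrix (Fin 2 × Fin 2) (Fin 2 × Fin 2) ℂ) (A B : Matrix (Fin 2) (Fin 2) ℂ),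
        U * Uᴴ = 1 ∧ A.PosSemidef ∧ A.trace = 1 ∧ B.PosSemidef ∧ B.trace = 1 ∧
          U * G * Uᴴ = A ⊗ₖ B) ↔
      l1 * l4 = l2 * l3 := by
  constructor
  · rintro ⟨U, A, B, hU, hA, -, hB, -, hUG⟩
    obtain ⟨a, b, ha, ha0, hb, hb0, hab⟩ :=
      hG.isHermitian.map_eigenvalues_of_unitary_conj_eq_kronecker hU hA hB hUG
    exact mul_eq_mul_of_map_univ_eq_products h21 h32 h43 ha ha0 hb hb0 (hab.symm.trans heig)
  · intro hcond
    have hsum : l1 + l2 + l3 + l4 = 1 := by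
      have := hG.isHermitian.sum_map_eigenvalues_eq_re_trace
      rw [heig, htr] at this
      simpa [add_assoc] using this
    obtain ⟨U, hU, hUG⟩ := (hG.isHermitian.exists_unitary_conj_eq_diagonal_iff _).mpr
      (heig.trans (map_univ_mul_marginals_eq hsum hcond).symm)
    have hA0 : 0 ≤ ![l1 + l2, l3 + l4] := fun i => by fin_cases i <;> simp <;> linarith
    have hB0 : 0 ≤ ![l1 + l3, l2 + l4] := fun i => by fin_cases i <;> simp <;> linarith
    have hA1 : ∑ i, ![l1 + l2, l3 + l4] i = 1 := by
      rw [Fin.sum_univ_two]; exact (by linarith : l1 + l2 + (l3 + l4) = 1)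
    have hB1 : ∑ i, ![l1 + l3, l2 + l4] i = 1 := by
      rw [Fin.sum_univ_two]; exact (by linarith : l1 + l3 + (l2 + l4) = 1)
    refine ⟨U, diagonal (RCLike.ofReal ∘ ![l1 + l2, l3 + l4]),
      diagonal (RCLike.ofReal ∘ ![l1 + l3, l2 + l4]), hU, posSemidef_diagonal_ofReal hA0,
      trace_diagonal_ofReal_eq_one hA1, posSemidef_diagonal_ofReal hB0,
      trace_diagonal_ofReal_eq_one hB1, ?_⟩
    rw [hUG, diagonal_kronecker_diagonal]
    congr 1
    funext p
    simp
end

section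
/- Let G be a 4×4 complex Hermitian positive semidefinite matrix indexed by (Fin 2) × (Fin 2) with trace 1. Define the reduced spatial coherence matrix G_s (2×2, entries (G_s) k l = ∑_i G (k,i) (l,i)) and the reduced polarization coherence matrix G_p (2×2, entries (G_p) i j = ∑_k G (k,i) (k,j)). Then the entropies satisfy the subadditivity inequality S(G) ≤ S(G_s) + S(G_p), where the entropy of a Hermitian positive semidefinite trace-1 matrix is S = −∑_j μ_j log₂ μ_j over its eigenvalues μ_j, with the convention 0 · log₂ 0 = 0. -/
open Matrix ComplexOrder

/-- The von Neumann entropy (base 2) of a Hermitian matrix: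
`S = -∑ μ_j log₂ μ_j` over its eigenvalues, with `0 · log₂ 0 = 0`
(automatic since `Real.logb 2 0 = 0`). -/
noncomputable def entropy {n : Type*} [Fintype n] [DecidableEq n] {M : Matrix n n ℂ}
    (hM : M.IsHermitian) : ℝ :=
  -∑ i, hM.eigenvalues i * Real.logb 2 (hM.eigenvalues i)

/-- The reduced spatial coherence matrix: trace out the polarization index. -/
noncomputable def redS (G : Matrix (Fin 2 × Fin 2) (Fin 2 × Fin 2) ℂ) :
    Matrix (Fin 2) (Fin 2) ℂ :=
  Matrix.of fun k l => ∑ i, G (k, i) (l, i)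

/-- The reduced polarization coherence matrix: trace out the spatial index. -/
noncomputable def redP (G : Matrix (Fin 2 × Fin 2) (Fin 2 × Fin 2) ℂ) :
    Matrix (Fin 2) (Fin 2) ℂ :=
  Matrix.of fun i j => ∑ k, G (k, i) (k, j)

/-!
Diagonalize `G_s = E diag(a) Eᴴ` and `G_p = F diag(b) Fᴴ` and put `W = E ⊗ F`. The diagonal `c`
of `Wᴴ G W` is a probability distribution on pairs `(k, i)` whose marginals are `a` and `b`,
because partial traces commute with conjugation by a product unitary.

On one side, `c = λ ᵥ* T` with `λ` the spectrum of `G` and `T m x = ‖(Uᴴ W) m x‖²` doubly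
stochastic (`U` diagonalizing `G`), so concavity of `x ↦ -x log x` gives `S(G) ≤ H(c)`. On the
other, Gibbs' inequality against the product distribution `a ⊗ b` is classical subadditivity
`H(c) ≤ H(a) + H(b) = S(G_s) + S(G_p)`.
-/

open Real Finset Kronecker

namespace Real

variable {ι κ : Type*} [Fintype ι] [Fintype κ]

theorem sum_mul_log_le_sum_mul_log {p q : ι → ℝ} (hp : 0 ≤ p) (hq : 0 ≤ q)
    (hpq : ∀ i, q i = 0 → p i = 0) (hsum : ∑ i, q i ≤ ∑ i, p i) :
    ∑ i, p i * log (q i) ≤ ∑ i, p i * log (p i) := by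
  have hterm : ∀ i, p i * log (q i) ≤ p i * log (p i) + (q i - p i) := by
    intro i
    have hqi : 0 ≤ q i := hq i
    rcases (show 0 ≤ p i from hp i).eq_or_lt with hpi | hpi
    · simpa [← hpi] using hqi
    replace hqi : 0 < q i := hqi.lt_of_ne fun h => hpi.ne' (hpq i h.symm)
    have h := mul_le_mul_of_nonneg_left (log_le_sub_one_of_pos (div_pos hqi hpi)) hpi.le
    rw [log_div hqi.ne' hpi.ne', mul_sub, mul_sub, mul_div_cancel₀ _ hpi.ne'] at h
    linarith
  calc ∑ i, p i * log (q i) ≤ ∑ i, (p i * log (p i) + (q i - p i)) :=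
        sum_le_sum fun i _ => hterm i
    _ ≤ ∑ i, p i * log (p i) := by
      rw [sum_add_distrib, sum_sub_distrib]; linarith

theorem sum_negMulLog_le_sum_negMulLog_vecMul [DecidableEq ι] {T : Matrix ι ι ℝ}
    (hT : T ∈ doublyStochastic ℝ ι) {p : ι → ℝ} (hp : 0 ≤ p) :
    ∑ i, negMulLog (p i) ≤ ∑ j, negMulLog ((p ᵥ* T) j) := by
  obtain ⟨hT0, hrow, hcol⟩ := mem_doublyStochastic_iff_sum.mp hT
  calc ∑ i, negMulLog (p i) = ∑ j, ∑ i, T i j • negMulLog (p i) := by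
        rw [sum_comm]; simp [← sum_mul, hrow]
    _ ≤ ∑ j, negMulLog (∑ i, T i j • p i) := sum_le_sum fun j _ =>
        concaveOn_negMulLog.le_map_sum (fun i _ => hT0 i j) (hcol j) fun i _ => hp i
    _ = ∑ j, negMulLog ((p ᵥ* T) j) := by simp [vecMul, dotProduct, mul_comm]

theorem sum_negMulLog_le_sum_negMulLog_marginals {c : ι × κ → ℝ} (hc : 0 ≤ c)
    (hsum : ∑ x, c x = 1) :
    ∑ x, negMulLog (c x) ≤
      ∑ k, negMulLog (∑ i, c (k, i)) + ∑ i, negMulLog (∑ k, c (k, i)) := by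
  set a : ι → ℝ := fun k => ∑ i, c (k, i)
  set b : κ → ℝ := fun i => ∑ k, c (k, i)
  have ha : ∀ x, a x.1 = 0 → c x = 0 := fun x h =>
    (sum_eq_zero_iff_of_nonneg fun i _ => hc (x.1, i)).mp h x.2 (mem_univ _)
  have hb : ∀ x, b x.2 = 0 → c x = 0 := fun x h =>
    (sum_eq_zero_iff_of_nonneg fun k _ => hc (k, x.2)).mp h x.1 (mem_univ _)
  have hsa : ∑ k, a k = 1 := by rw [← hsum, Fintype.sum_prod_type]
  have hsb : ∑ i, b i = 1 := by rw [← hsum, Fintype.sum_prod_type_right]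
  have gibbs := sum_mul_log_le_sum_mul_log (q := fun x => a x.1 * b x.2) hc
    (fun x => mul_nonneg (sum_nonneg fun i _ => hc _) (sum_nonneg fun k _ => hc _))
    (fun x h => (mul_eq_zero.mp h).elim (ha x) (hb x))
    (by rw [Fintype.sum_prod_type, ← Fintype.sum_mul_sum, hsa, hsb, hsum, mul_one])
  have hsplit : ∑ x, c x * log (a x.1 * b x.2)
      = ∑ k, a k * log (a k) + ∑ i, b i * log (b i) := by
    have hlog : ∀ x, c x * log (a x.1 * b x.2) = c x * log (a x.1) + c x * log (b x.2) := by
      intro x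
      by_cases hx : c x = 0
      · simp [hx]
      rw [log_mul (mt (ha x) hx) (mt (hb x) hx), mul_add]
    simp only [hlog, sum_add_distrib, Fintype.sum_prod_type, ← sum_mul]
    rw [sum_comm]
    simp only [← sum_mul]
    rfl
  simp only [negMulLog, neg_mul, sum_neg_distrib]
  linarith

end Real

namespace Matrix

section PartialTrace

variable {R m n m' n' : Type*} [Fintype m] [Fintype n]

def partialTraceRight [AddCommMonoid R] (G : Matrix (m × n) (m × n) R) : Matrix m m R :=
  of fun k l => ∑ i, G (k, i) (l, i)

def partialTraceLeft [AddCommMonoid R] (G : Matrix (m × n) (m × n) R) : Matrix n n R :=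
  of fun i j => ∑ k, G (k, i) (k, j)

variable [CommSemiring R] [StarRing R]

theorem partialTraceRight_conjTranspose_kronecker_mul_mul [Fintype n'] [DecidableEq n]
    (E : Matrix m m' R) {F : Matrix n n' R} (hF : F * Fᴴ = 1) (G : Matrix (m × n) (m × n) R) :
    partialTraceRight ((E ⊗ₖ F)ᴴ * G * (E ⊗ₖ F)) = Eᴴ * partialTraceRight G * E := by
  have hF' : ∀ a b, ∑ i, star (F a i) * F b i = if b = a then 1 else 0 := fun a b => by
    simpa [mul_apply, one_apply, mul_comm] using congr_fun₂ hF b a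
  ext k l
  calc _ = ∑ y : m × n, ∑ x : m × n,
        star (E x.1 k) * G x y * E y.1 l * if y.2 = x.2 then 1 else 0 := by
        simp only [partialTraceRight, of_apply, mul_apply, conjTranspose_apply,
          kroneckerMap_apply, star_mul', sum_mul]
        rw [sum_comm]
        refine sum_congr rfl fun y _ => ?_
        rw [sum_comm]
        refine sum_congr rfl fun x _ => ?_
        rw [← hF', mul_sum]
        exact sum_congr rfl fun i _ => by ring
    _ = _ := by
        simp only [Fintype.sum_prod_type, mul_ite, mul_one, mul_zero, sum_ite_eq, mem_univ,
          if_true, partialTraceRight, mul_apply, of_apply, sum_mul, mul_sum,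
          conjTranspose_apply]
        exact sum_congr rfl fun _ _ => sum_comm

theorem partialTraceLeft_conjTranspose_kronecker_mul_mul [Fintype m'] [DecidableEq m]
    {E : Matrix m m' R} (hE : E * Eᴴ = 1) (F : Matrix n n' R) (G : Matrix (m × n) (m × n) R) :
    partialTraceLeft ((E ⊗ₖ F)ᴴ * G * (E ⊗ₖ F)) = Fᴴ * partialTraceLeft G * F := by
  have hE' : ∀ a b, ∑ k, star (E a k) * E b k = if b = a then 1 else 0 := fun a b => by
    simpa [mul_apply, one_apply, mul_comm] using congr_fun₂ hE b a
  ext i j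
  calc _ = ∑ y : m × n, ∑ x : m × n,
        star (F x.2 i) * G x y * F y.2 j * if y.1 = x.1 then 1 else 0 := by
        simp only [partialTraceLeft, of_apply, mul_apply, conjTranspose_apply,
          kroneckerMap_apply, star_mul', sum_mul]
        rw [sum_comm]
        refine sum_congr rfl fun y _ => ?_
        rw [sum_comm]
        refine sum_congr rfl fun x _ => ?_
        rw [← hE', mul_sum]
        exact sum_congr rfl fun k _ => by ring
    _ = _ := by
        simp only [Fintype.sum_prod_type_right, mul_ite, mul_one, mul_zero, sum_ite_eq,
          mem_univ, if_true, partialTraceLeft, mul_apply, of_apply, sum_mul, mul_sum,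
          conjTranspose_apply]
        exact sum_congr rfl fun _ _ => sum_comm

end PartialTrace

section Unitary

variable {𝕜 n : Type*} [RCLike 𝕜] [Fintype n] [DecidableEq n]

theorem normSq_apply_mem_doublyStochastic {V : Matrix n n 𝕜} (hV : V ∈ unitaryGroup n 𝕜) :
    (of fun i j => ‖V i j‖ ^ 2) ∈ doublyStochastic ℝ n := by
  have hsq : ∀ z : 𝕜, ((‖z‖ ^ 2 : ℝ) : 𝕜) = z * star z := fun z => by
    rw [RCLike.star_def, RCLike.mul_conj]; norm_cast
  refine mem_doublyStochastic_iff_sum.mpr ⟨fun _ _ => sq_nonneg _, fun i => ?_, fun j => ?_⟩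
  · have h := congr_fun₂ (mem_unitaryGroup_iff.mp hV) i i
    rw [mul_apply, one_apply_eq] at h
    exact_mod_cast (by simpa [hsq] using h : ((∑ j, ‖V i j‖ ^ 2 : ℝ) : 𝕜) = 1)
  · have h := congr_fun₂ (mem_unitaryGroup_iff'.mp hV) j j
    rw [mul_apply, one_apply_eq] at h
    exact_mod_cast (by simpa [hsq, mul_comm] using h : ((∑ i, ‖V i j‖ ^ 2 : ℝ) : 𝕜) = 1)

theorem IsHermitian.re_diag_conjTranspose_mul_mul {A : Matrix n n 𝕜} (hA : A.IsHermitian)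
    (W : Matrix n n 𝕜) (x : n) :
    RCLike.re ((Wᴴ * A * W) x x) = (hA.eigenvalues ᵥ* of fun m y =>
      ‖((hA.eigenvectorUnitary : Matrix n n 𝕜)ᴴ * W) m y‖ ^ 2) x := by
  set V := (hA.eigenvectorUnitary : Matrix n n 𝕜)ᴴ * W
  have hconj : Wᴴ * A * W = Vᴴ * diagonal (RCLike.ofReal ∘ hA.eigenvalues) * V := by
    conv_lhs => rw [hA.spectral_theorem]
    simp [V, Matrix.mul_assoc, star_eq_conjTranspose, conjTranspose_mul]
  rw [hconj, mul_apply]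
  simp only [mul_diagonal, conjTranspose_apply, Function.comp_apply, vecMul, dotProduct,
    of_apply, map_sum]
  refine sum_congr rfl fun m _ => ?_
  rw [mul_right_comm, RCLike.star_def, RCLike.conj_mul, ← RCLike.ofReal_pow, ← RCLike.ofReal_mul,
    RCLike.ofReal_re, mul_comm]

theorem PosSemidef.sum_negMulLog_eigenvalues_le {A : Matrix n n 𝕜} (hA : A.PosSemidef)
    {W : Matrix n n 𝕜} (hW : W ∈ unitaryGroup n 𝕜) :
    ∑ m, negMulLog (hA.isHermitian.eigenvalues m) ≤
      ∑ x, negMulLog (RCLike.re ((Wᴴ * A * W) x x)) := by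
  simp only [hA.isHermitian.re_diag_conjTranspose_mul_mul]
  have hV := mul_mem (Unitary.star_mem hA.isHermitian.eigenvectorUnitary.2) hW
  exact sum_negMulLog_le_sum_negMulLog_vecMul (normSq_apply_mem_doublyStochastic hV)
    hA.eigenvalues_nonneg

theorem trace_conjTranspose_mul_mul_of_mem_unitaryGroup {W : Matrix n n 𝕜}
    (hW : W ∈ unitaryGroup n 𝕜) (A : Matrix n n 𝕜) : trace (Wᴴ * A * W) = trace A := by
  rw [trace_mul_cycle, ← star_eq_conjTranspose, mem_unitaryGroup_iff.mp hW, one_mul]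

end Unitary

section Marginals

variable {𝕜 m n : Type*} [RCLike 𝕜] [Fintype m] [Fintype n] [DecidableEq m] [DecidableEq n]

theorem IsHermitian.conjTranspose_eigenvectorUnitary_mul_mul {A : Matrix n n 𝕜}
    (hA : A.IsHermitian) :
    (hA.eigenvectorUnitary : Matrix n n 𝕜)ᴴ * A * (hA.eigenvectorUnitary : Matrix n n 𝕜) =
      diagonal (RCLike.ofReal ∘ hA.eigenvalues) :=
  (Unitary.conjStarAlgAut_star_apply _ _).symm.trans hA.conjStarAlgAut_star_eigenvectorUnitary

theorem IsHermitian.sum_re_diag_conj_kronecker_of_partialTraceRight_eq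
    {G : Matrix (m × n) (m × n) 𝕜} {B : Matrix m m 𝕜} (hB : B.IsHermitian)
    (hGB : partialTraceRight G = B) {F : Matrix n n 𝕜} (hF : F ∈ unitaryGroup n 𝕜) (k : m) :
    ∑ i, RCLike.re ((((hB.eigenvectorUnitary : Matrix m m 𝕜) ⊗ₖ F)ᴴ * G *
      ((hB.eigenvectorUnitary : Matrix m m 𝕜) ⊗ₖ F)) (k, i) (k, i)) =
      hB.eigenvalues k := by
  have h := congr_fun₂ (partialTraceRight_conjTranspose_kronecker_mul_mul
    (hB.eigenvectorUnitary : Matrix m m 𝕜) (mem_unitaryGroup_iff.mp hF) G) k k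
  rw [hGB, hB.conjTranspose_eigenvectorUnitary_mul_mul] at h
  simp only [partialTraceRight, of_apply, diagonal_apply_eq, Function.comp_apply] at h
  rw [← map_sum, h, RCLike.ofReal_re]

theorem IsHermitian.sum_re_diag_conj_kronecker_of_partialTraceLeft_eq
    {G : Matrix (m × n) (m × n) 𝕜} {B : Matrix n n 𝕜} (hB : B.IsHermitian)
    (hGB : partialTraceLeft G = B) {E : Matrix m m 𝕜} (hE : E ∈ unitaryGroup m 𝕜) (i : n) :
    ∑ k, RCLike.re (((E ⊗ₖ (hB.eigenvectorUnitary : Matrix n n 𝕜))ᴴ * G *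
      (E ⊗ₖ (hB.eigenvectorUnitary : Matrix n n 𝕜))) (k, i) (k, i)) =
      hB.eigenvalues i := by
  have h := congr_fun₂ (partialTraceLeft_conjTranspose_kronecker_mul_mul
    (mem_unitaryGroup_iff.mp hE) (hB.eigenvectorUnitary : Matrix n n 𝕜) G) i i
  rw [hGB, hB.conjTranspose_eigenvectorUnitary_mul_mul] at h
  simp only [partialTraceLeft, of_apply, diagonal_apply_eq, Function.comp_apply] at h
  rw [← map_sum, h, RCLike.ofReal_re]

end Marginals

end Matrix

theorem entropy_eq_sum_negMulLog_div {n : Type*} [Fintype n] [DecidableEq n]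
    {M : Matrix n n ℂ} (hM : M.IsHermitian) :
    entropy hM = (∑ i, negMulLog (hM.eigenvalues i)) / log 2 := by
  simp only [entropy, negMulLog, logb, sum_div, ← sum_neg_distrib]
  exact sum_congr rfl fun i _ => by ring

/-- Subadditivity of entropy: for a trace-1 Hermitian positive semidefinite 4×4 coherence
matrix `G`, `S(G) ≤ S(G_s) + S(G_p)`, where `G_s`, `G_p` are the reduced spatial and
polarization coherence matrices. -/
theorem entropy_subadditive
    (G : Matrix (Fin 2 × Fin 2) (Fin 2 × Fin 2) ℂ) (hG : G.PosSemidef)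
    (htr : G.trace = 1)
    (hs : (redS G).IsHermitian) (hp : (redP G).IsHermitian) :
    entropy hG.isHermitian ≤ entropy hs + entropy hp := by
  set W : Matrix (Fin 2 × Fin 2) (Fin 2 × Fin 2) ℂ :=
    (hs.eigenvectorUnitary : Matrix (Fin 2) (Fin 2) ℂ) ⊗ₖ (hp.eigenvectorUnitary : Matrix _ _ ℂ)
  have hW : W ∈ unitaryGroup _ ℂ :=
    kronecker_mem_unitary hs.eigenvectorUnitary.2 hp.eigenvectorUnitary.2
  set c : Fin 2 × Fin 2 → ℝ := fun x => RCLike.re ((Wᴴ * G * W) x x)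
  have hc0 : 0 ≤ c := fun x =>
    (RCLike.nonneg_iff.mp (hG.conjTranspose_mul_mul_same W).diag_nonneg).1
  have hc1 : ∑ x, c x = 1 := by
    have h := congr_arg RCLike.re (trace_conjTranspose_mul_mul_of_mem_unitaryGroup hW G)
    rw [htr, RCLike.one_re, trace, map_sum] at h
    exact h
  have hcs : ∀ k, ∑ i, c (k, i) = hs.eigenvalues k :=
    hs.sum_re_diag_conj_kronecker_of_partialTraceRight_eq (G := G) rfl hp.eigenvectorUnitary.2
  have hcp : ∀ i, ∑ k, c (k, i) = hp.eigenvalues i :=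
    hp.sum_re_diag_conj_kronecker_of_partialTraceLeft_eq (G := G) rfl hs.eigenvectorUnitary.2
  have hsub := sum_negMulLog_le_sum_negMulLog_marginals hc0 hc1
  simp only [hcs, hcp] at hsub
  rw [entropy_eq_sum_negMulLog_div, entropy_eq_sum_negMulLog_div, entropy_eq_sum_negMulLog_div,
    ← add_div]
  exact div_le_div_of_nonneg_right ((hG.sum_negMulLog_eigenvalues_le hW).trans hsub)
    (log_pos one_lt_two).le
end

section
/- Let G be a 4×4 complex Hermitian positive semidefinite matrix indexed by (Fin 2) × (Fin 2) with trace 1, and let λ₁ ≥ λ₂ ≥ λ₃ ≥ λ₄ ≥ 0 be its eigenvalues in decreasing order. Then for every 4×4 unitary matrix U, the largest eigenvalue of the reduced polarization coherence matrix of U G Uᴴ (the 2×2 matrix with entries (G_p) i j = ∑_k (U G Uᴴ) (k,i) (k,j)) is at most λ₁ + λ₂. -/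
/-!
If `v` is a unit eigenvector of the reduced matrix of `U G Uᴴ` for the eigenvalue `μ`, then
`μ = tr (Wᴴ G W)` for the isometry `W = Uᴴ (1 ⊗ v) : ℂ² → ℂ⁴`. Ky Fan's maximum principle bounds
such a trace by `λ₁ + λ₂`: in an eigenbasis of `G` it equals `∑ λⱼ cⱼ`, where the weights
`cⱼ = (V Vᴴ)ⱼⱼ` of the isometry `V` lie in `[0, 1]` and sum to `2`, and
`λⱼ cⱼ ≤ max (λⱼ - λ₂) 0 + λ₂ cⱼ`.
-/

open Matrix ComplexOrder

theorem sum_mul_le_sum_max_sub_add_mul {ι : Type*} [Fintype ι] (lam c : ι → ℝ) (t : ℝ)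
    (hc0 : ∀ i, 0 ≤ c i) (hc1 : ∀ i, c i ≤ 1) :
    ∑ i, lam i * c i ≤ ∑ i, max (lam i - t) 0 + t * ∑ i, c i := by
  rw [Finset.mul_sum, ← Finset.sum_add_distrib]
  gcongr with i
  nlinarith [hc0 i, hc1 i, le_max_left (lam i - t) 0, le_max_right (lam i - t) 0]

theorem sum_max_sub_eq_of_map_eq {ι : Type*} [Fintype ι] {lam : ι → ℝ} {l1 l2 l3 l4 : ℝ}
    (h21 : l2 ≤ l1) (h32 : l3 ≤ l2) (h43 : l4 ≤ l3)
    (hlam : Finset.univ.val.map lam = ({l1, l2, l3, l4} : Multiset ℝ)) :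
    ∑ i, max (lam i - l2) 0 = l1 - l2 := by
  rw [Finset.sum_eq_multiset_sum, show (fun i => max (lam i - l2) 0) = (max · 0) ∘ (· - l2) ∘ lam
    from rfl, ← Multiset.map_map, ← Multiset.map_map, hlam]
  simp only [Multiset.insert_eq_cons, Multiset.map_cons, Multiset.map_singleton,
    Multiset.sum_cons, Multiset.sum_singleton]
  rw [max_eq_left (by linarith), max_eq_right (by linarith), max_eq_right (by linarith),
    max_eq_right (by linarith)]
  ring

namespace Matrix

section Isometry

variable {m n k : Type*} [Fintype m] [Fintype n] [Fintype k]

theorem trace_conjTranspose_mul_diagonal_mul [DecidableEq m] (V : Matrix m k ℂ) (d : m → ℂ) :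
    (Vᴴ * diagonal d * V).trace = ∑ j, d j * (V * Vᴴ) j j := by
  rw [Matrix.mul_assoc, trace_mul_comm, Matrix.mul_assoc]
  simp [trace, diagonal_mul]

theorem re_diag_mul_conjTranspose_nonneg (V : Matrix m k ℂ) (j : m) : 0 ≤ ((V * Vᴴ) j j).re :=
  (Complex.nonneg_iff.mp (posSemidef_self_mul_conjTranspose V).diag_nonneg).1

theorem posSemidef_one_sub_mul_conjTranspose [DecidableEq m] [DecidableEq k]
    {V : Matrix m k ℂ} (hV : Vᴴ * V = 1) : (1 - V * Vᴴ).PosSemidef := by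
  have hP : (1 - V * Vᴴ) * (1 - V * Vᴴ)ᴴ = 1 - V * Vᴴ := by
    simp only [conjTranspose_sub, conjTranspose_one, conjTranspose_mul,
      conjTranspose_conjTranspose, Matrix.sub_mul, Matrix.mul_sub, Matrix.one_mul, Matrix.mul_one,
      Matrix.mul_assoc, ← Matrix.mul_assoc Vᴴ V, hV]
    abel
  rw [← hP]
  exact posSemidef_self_mul_conjTranspose _

theorem re_diag_mul_conjTranspose_le_one [DecidableEq m] [DecidableEq k]
    {V : Matrix m k ℂ} (hV : Vᴴ * V = 1) (j : m) : ((V * Vᴴ) j j).re ≤ 1 := by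
  have := (Complex.nonneg_iff.mp ((posSemidef_one_sub_mul_conjTranspose hV).diag_nonneg (i := j))).1
  simpa using this

theorem trace_mul_conjTranspose_of_conjTranspose_mul_eq_one [DecidableEq k]
    {V : Matrix m k ℂ} (hV : Vᴴ * V = 1) : (V * Vᴴ).trace = Fintype.card k := by
  rw [trace_mul_comm, hV, trace_one]

theorem IsHermitian.re_trace_conjTranspose_mul_mul_le [DecidableEq n] [DecidableEq k]
    {A : Matrix n n ℂ} (hA : A.IsHermitian) {W : Matrix n k ℂ} (hW : Wᴴ * W = 1) (t : ℝ) :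
    (Wᴴ * A * W).trace.re ≤ ∑ j, max (hA.eigenvalues j - t) 0 + t * Fintype.card k := by
  set C : Matrix n n ℂ := (hA.eigenvectorUnitary : Matrix n n ℂ)
  set V := Cᴴ * W
  have hV : Vᴴ * V = 1 := by
    have hC : C * Cᴴ = 1 := Unitary.coe_mul_star_self hA.eigenvectorUnitary
    simp only [V, conjTranspose_mul, conjTranspose_conjTranspose, Matrix.mul_assoc,
      ← Matrix.mul_assoc C, hC, Matrix.one_mul, hW]
  have hA' : Wᴴ * A * W = Vᴴ * diagonal (Complex.ofReal ∘ hA.eigenvalues) * V := by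
    conv_lhs => rw [hA.spectral_theorem]
    simp only [V, Unitary.conjStarAlgAut_apply, conjTranspose_mul, conjTranspose_conjTranspose,
      Matrix.mul_assoc, star_eq_conjTranspose]
    rfl
  calc (Wᴴ * A * W).trace.re = ∑ j, hA.eigenvalues j * ((V * Vᴴ) j j).re := by
        simp [hA', trace_conjTranspose_mul_diagonal_mul, Complex.re_sum]
    _ ≤ ∑ j, max (hA.eigenvalues j - t) 0 + t * ∑ j, ((V * Vᴴ) j j).re :=
        sum_mul_le_sum_max_sub_add_mul _ _ t (re_diag_mul_conjTranspose_nonneg V)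
          (re_diag_mul_conjTranspose_le_one hV)
    _ = ∑ j, max (hA.eigenvalues j - t) 0 + t * Fintype.card k := by
        have htr := trace_mul_conjTranspose_of_conjTranspose_mul_eq_one hV
        simp only [trace, diag_apply] at htr
        rw [← Complex.re_sum, htr, Complex.natCast_re]

end Isometry

section PartialTrace

variable {m n : Type*} [Fintype m] [Fintype n] [DecidableEq m]

/-- The map `x ↦ x ⊗ v`, i.e. `1 ⊗ₖ v` with the trivial column index of `v` dropped. -/
def idKronCol (m : Type*) [DecidableEq m] (v : n → ℂ) : Matrix (m × n) m ℂ :=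
  of fun p k => if p.1 = k then v p.2 else 0

theorem idKronCol_conjTranspose_mul_self {v : n → ℂ} (hv : star v ⬝ᵥ v = 1) :
    (idKronCol m v)ᴴ * idKronCol m v = 1 := by
  ext k l
  simp only [idKronCol, mul_apply, conjTranspose_apply, of_apply, Fintype.sum_prod_type,
    one_apply]
  by_cases hkl : k = l
  · subst hkl
    simpa [dotProduct] using hv
  · simp [hkl, Ne.symm hkl]

theorem trace_idKronCol_conjTranspose_mul_mul (A : Matrix (Fin 2 × Fin 2) (Fin 2 × Fin 2) ℂ)
    (v : Fin 2 → ℂ) :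
    ((idKronCol (Fin 2) v)ᴴ * A * idKronCol (Fin 2) v).trace = star v ⬝ᵥ redP A *ᵥ v := by
  simp only [trace, diag_apply, mul_apply, conjTranspose_apply, idKronCol, of_apply,
    Fintype.sum_prod_type, dotProduct, mulVec, redP, Pi.star_apply, RCLike.star_def,
    Fin.sum_univ_two, Fin.isValue, mul_ite, mul_zero, Finset.sum_ite_irrel,
    Finset.sum_const_zero, Finset.sum_ite_eq', Finset.mem_univ, ↓reduceIte, one_ne_zero,
    map_zero, zero_mul, add_zero, zero_ne_one, zero_add]
  ring

end PartialTrace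

end Matrix

theorem reduced_eigenvalue_le_sum_two_largest_general
    (G : Matrix (Fin 2 × Fin 2) (Fin 2 × Fin 2) ℂ) (hG : G.PosSemidef)
    (l1 l2 l3 l4 : ℝ) (h21 : l2 ≤ l1) (h32 : l3 ≤ l2) (h43 : l4 ≤ l3)
    (heig : Finset.univ.val.map hG.isHermitian.eigenvalues =
      ({l1, l2, l3, l4} : Multiset ℝ)) :
    ∀ U : Matrix (Fin 2 × Fin 2) (Fin 2 × Fin 2) ℂ, U * Uᴴ = 1 →
      ∀ (hp : (redP (U * G * Uᴴ)).IsHermitian) (i : Fin 2),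
        hp.eigenvalues i ≤ l1 + l2 := by
  intro U hU hp i
  set v : Fin 2 → ℂ := ⇑(hp.eigenvectorBasis i)
  have hv : star v ⬝ᵥ v = 1 := by
    rw [dotProduct_comm, ← EuclideanSpace.inner_eq_star_dotProduct]
    exact hp.eigenvectorBasis.inner_eq_one i
  set W := Uᴴ * idKronCol (Fin 2) v
  have hW : Wᴴ * W = 1 := by
    simp only [W, conjTranspose_mul, conjTranspose_conjTranspose, Matrix.mul_assoc,
      ← Matrix.mul_assoc U, hU, Matrix.one_mul, idKronCol_conjTranspose_mul_self hv]
  calc hp.eigenvalues i = (star v ⬝ᵥ redP (U * G * Uᴴ) *ᵥ v).re := hp.eigenvalues_eq i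
    _ = (Wᴴ * G * W).trace.re := by
        simp only [W, ← trace_idKronCol_conjTranspose_mul_mul, conjTranspose_mul,
          conjTranspose_conjTranspose, Matrix.mul_assoc]
    _ ≤ ∑ j, max (hG.isHermitian.eigenvalues j - l2) 0 + l2 * Fintype.card (Fin 2) :=
        hG.isHermitian.re_trace_conjTranspose_mul_mul_le hW l2
    _ = l1 + l2 := by
        rw [sum_max_sub_eq_of_map_eq h21 h32 h43 heig, Fintype.card_fin]
        push_cast
        ring

/-- For a trace-1 Hermitian positive semidefinite 4×4 coherence matrix with eigenvalues
`l1 ≥ l2 ≥ l3 ≥ l4 ≥ 0` and any global unitary `U`, every (in particular the largest)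
eigenvalue of the reduced polarization coherence matrix of `U G Uᴴ` is at most `l1 + l2`. -/
theorem reduced_eigenvalue_le_sum_two_largest
    (G : Matrix (Fin 2 × Fin 2) (Fin 2 × Fin 2) ℂ) (hG : G.PosSemidef)
    (htr : G.trace = 1)
    (l1 l2 l3 l4 : ℝ) (h21 : l2 ≤ l1) (h32 : l3 ≤ l2) (h43 : l4 ≤ l3) (h4 : 0 ≤ l4)
    (heig : Finset.univ.val.map hG.isHermitian.eigenvalues =
      ({l1, l2, l3, l4} : Multiset ℝ)) :
    ∀ U : Matrix (Fin 2 × Fin 2) (Fin 2 × Fin 2) ℂ, U * Uᴴ = 1 →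
      ∀ (hp : (redP (U * G * Uᴴ)).IsHermitian) (i : Fin 2),
        hp.eigenvalues i ≤ l1 + l2 :=
  reduced_eigenvalue_le_sum_two_largest_general G hG l1 l2 l3 l4 h21 h32 h43 heig
end

section
/- Let G be a 4×4 complex Hermitian positive semidefinite matrix indexed by (Fin 2) × (Fin 2) with trace 1, and let λ₁ ≥ λ₂ ≥ λ₃ ≥ λ₄ ≥ 0 be its eigenvalues in decreasing order. Define f(x) = −x log₂ x − (1−x) log₂ (1−x) for x ∈ [0,1], with 0 · log₂ 0 = 0. Then for every 4×4 unitary matrix U, the entropy of the reduced polarization coherence matrix of U G Uᴴ (the 2×2 matrix with entries ∑_k (U G Uᴴ) (k,i) (k,j)) is at least f(λ₁ + λ₂). That is, the minimum entropy that can be locked in the polarization degree of freedom under all global unitaries is bounded below by f(λ₁ + λ₂). -/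
open Matrix ComplexOrder

/-- The binary entropy function `f(x) = -x log₂ x - (1-x) log₂ (1-x)`, with `0 · log₂ 0 = 0`
(automatic since `Real.logb 2 0 = 0`). -/
noncomputable def fEnt (x : ℝ) : ℝ :=
  -(x * Real.logb 2 x) - (1 - x) * Real.logb 2 (1 - x)

/-! The two eigenvalues of `redP (U G Uᴴ)` add up to one, so its entropy is `f μ` for either
eigenvalue `μ`. For a unit eigenvector `w`, `μ = ∑ₖ ⟪eₖ ⊗ w, U G Uᴴ (eₖ ⊗ w)⟫` is a sum of two
Rayleigh quotients of `G` at the orthonormal vectors `Uᴴ (eₖ ⊗ w)`, hence at most `λ₁ + λ₂` by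
Ky Fan's inequality. Both eigenvalues therefore lie in `[1 - (λ₁ + λ₂), λ₁ + λ₂]`, and `f` decreases
on `[1/2, 1]`. -/

section KyFan

variable {𝕜 E ι κ : Type*} [RCLike 𝕜] [NormedAddCommGroup E] [InnerProductSpace 𝕜 E]
  [Fintype ι] [Fintype κ] {T : E →ₗ[𝕜] E} {b : OrthonormalBasis ι 𝕜 E} {μ : ι → ℝ}

theorem re_inner_self_apply_eq_sum_of_eigenbasis (hb : ∀ i, T (b i) = (μ i : 𝕜) • b i) (x : E) :
    RCLike.re (inner 𝕜 x (T x)) = ∑ i, μ i * ‖inner 𝕜 (b i) x‖ ^ 2 := by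
  have hTx : T x = ∑ i, (μ i : 𝕜) • inner 𝕜 (b i) x • b i := by
    conv_lhs => rw [← b.sum_repr' x]
    simp only [map_sum, map_smul, hb, smul_smul, mul_comm]
  simp only [hTx, inner_sum, inner_smul_right, map_sum, RCLike.re_ofReal_mul]
  refine Finset.sum_congr rfl fun i _ => ?_
  rw [mul_comm (inner 𝕜 (b i) x), ← inner_conj_symm, RCLike.conj_mul,
    ← RCLike.ofReal_pow, RCLike.ofReal_re]

/-- Ky Fan's inequality; with `m` the `card κ`-th largest eigenvalue the right-hand side is the
sum of the `card κ` largest eigenvalues. -/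
theorem sum_re_inner_self_apply_le_of_eigenbasis (hb : ∀ i, T (b i) = (μ i : 𝕜) • b i)
    {v : κ → E} (hv : Orthonormal 𝕜 v) (m : ℝ) :
    ∑ k, RCLike.re (inner 𝕜 (v k) (T (v k))) ≤ ∑ i, max (μ i - m) 0 + Fintype.card κ * m := by
  set c : ι → ℝ := fun i => ∑ k, ‖inner 𝕜 (b i) (v k)‖ ^ 2
  have hc_le : ∀ i, c i ≤ 1 := fun i => by
    simpa [c, norm_inner_symm, b.orthonormal.1 i] using hv.sum_inner_products_le (b i) (s := .univ)
  have hc_sum : ∑ i, c i = Fintype.card κ := by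
    simp [c, Finset.sum_comm (γ := ι), b.sum_sq_norm_inner_right, hv.1]
  calc ∑ k, RCLike.re (inner 𝕜 (v k) (T (v k))) = ∑ i, μ i * c i := by
        simp only [re_inner_self_apply_eq_sum_of_eigenbasis hb, c, Finset.mul_sum]
        exact Finset.sum_comm
    _ ≤ ∑ i, (max (μ i - m) 0 + m * c i) := Finset.sum_le_sum fun i _ => by
        have := hc_le i
        have : 0 ≤ c i := by positivity
        nlinarith [le_max_left (μ i - m) 0, le_max_right (μ i - m) 0]
    _ = _ := by rw [Finset.sum_add_distrib, ← Finset.mul_sum, hc_sum, mul_comm]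

end KyFan

theorem Matrix.IsHermitian.sum_re_dotProduct_mulVec_le {𝕜 n κ : Type*} [RCLike 𝕜] [Fintype n]
    [DecidableEq n] [Fintype κ] {A : Matrix n n 𝕜} (hA : A.IsHermitian)
    {v : κ → EuclideanSpace 𝕜 n} (hv : Orthonormal 𝕜 v) (m : ℝ) :
    ∑ k, RCLike.re (star ⇑(v k) ⬝ᵥ A *ᵥ ⇑(v k)) ≤
      ∑ i, max (hA.eigenvalues i - m) 0 + Fintype.card κ * m := by
  have hb : ∀ i, toLpLin 2 2 A (hA.eigenvectorBasis i) =
      (hA.eigenvalues i : 𝕜) • hA.eigenvectorBasis i := fun i => by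
    rw [toLpLin_apply, hA.mulVec_eigenvectorBasis, WithLp.toLp_smul, WithLp.toLp_ofLp,
      RCLike.real_smul_eq_coe_smul (K := 𝕜)]
  simpa [EuclideanSpace.inner_eq_star_dotProduct, dotProduct_comm] using
    sum_re_inner_self_apply_le_of_eigenbasis hb hv m

theorem Matrix.IsHermitian.sum_eigenvalues_eq_re_trace {𝕜 n : Type*} [RCLike 𝕜] [Fintype n]
    [DecidableEq n] {A : Matrix n n 𝕜} (hA : A.IsHermitian) :
    ∑ i, hA.eigenvalues i = RCLike.re A.trace := by
  simp [hA.trace_eq_sum_eigenvalues]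

theorem Matrix.star_conjTranspose_mulVec_dotProduct {R m n : Type*} [CommRing R] [StarRing R]
    [Fintype m] [Fintype n] (U : Matrix m n R) (B : Matrix n n R) (x y : m → R) :
    star (Uᴴ *ᵥ x) ⬝ᵥ B *ᵥ (Uᴴ *ᵥ y) = star x ⬝ᵥ (U * B * Uᴴ) *ᵥ y := by
  rw [star_mulVec, conjTranspose_conjTranspose, dotProduct_mulVec, dotProduct_mulVec,
    dotProduct_mulVec, vecMul_vecMul, vecMul_vecMul, Matrix.mul_assoc]

def singleTensor {R m n : Type*} [Zero R] [DecidableEq m] (k : m) (w : n → R) : m × n → R :=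
  fun p => if p.1 = k then w p.2 else 0

theorem star_singleTensor_dotProduct {R m n : Type*} [CommSemiring R] [StarRing R] [Fintype m]
    [Fintype n] [DecidableEq m] (w : n → R) (k l : m) :
    star (singleTensor k w) ⬝ᵥ singleTensor l w = if k = l then star w ⬝ᵥ w else 0 := by
  by_cases h : k = l
  · subst h
    simp [dotProduct, singleTensor, Fintype.sum_prod_type, apply_ite]
  · simp [dotProduct, singleTensor, Fintype.sum_prod_type, apply_ite, h, Ne.symm h]

theorem Fintype.sum_comp_eq_of_map_univ_eq {ι α β : Type*} [Fintype ι] [AddCommMonoid β]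
    {f : ι → α} {s : Multiset α} (h : Finset.univ.val.map f = s) (g : α → β) :
    ∑ i, g (f i) = (s.map g).sum := by
  rw [← h, Multiset.map_map]
  rfl

theorem fEnt_eq_binEntropy_div_log_two (x : ℝ) : fEnt x = Real.binEntropy x / Real.log 2 := by
  simp only [fEnt, Real.binEntropy, Real.logb, Real.log_inv]
  ring

theorem fEnt_le_fEnt {x t : ℝ} (ht : t ≤ 1) (hxt : x ≤ t) (hxt' : 1 - x ≤ t) :
    fEnt t ≤ fEnt x := by
  have key {y : ℝ} (hy : 2⁻¹ ≤ y) (hyt : y ≤ t) : Real.binEntropy t ≤ Real.binEntropy y :=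
    Real.binEntropy_strictAntiOn.antitoneOn ⟨hy, hyt.trans ht⟩ ⟨hy.trans hyt, ht⟩ hyt
  rw [fEnt_eq_binEntropy_div_log_two, fEnt_eq_binEntropy_div_log_two]
  gcongr
  rcases le_total 2⁻¹ x with hx | hx
  · exact key hx hxt
  · exact Real.binEntropy_one_sub x ▸ key (by linarith) hxt'

theorem entropy_eq_fEnt_of_trace_eq_one {N : Matrix (Fin 2) (Fin 2) ℂ} (hN : N.IsHermitian)
    (htr : N.trace = 1) : entropy hN = fEnt (hN.eigenvalues 0) := by
  have hsum : hN.eigenvalues 0 + hN.eigenvalues 1 = 1 := by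
    simpa [Fin.sum_univ_two, htr] using hN.sum_eigenvalues_eq_re_trace
  rw [entropy, fEnt, Fin.sum_univ_two, show hN.eigenvalues 1 = 1 - hN.eigenvalues 0 by linarith]
  ring

theorem trace_redP (M : Matrix (Fin 2 × Fin 2) (Fin 2 × Fin 2) ℂ) :
    (redP M).trace = M.trace := by
  simp only [Matrix.trace, Matrix.diag, redP, Matrix.of_apply, Fintype.sum_prod_type]
  exact Finset.sum_comm

theorem star_dotProduct_redP_mulVec (M : Matrix (Fin 2 × Fin 2) (Fin 2 × Fin 2) ℂ)
    (w : Fin 2 → ℂ) :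
    star w ⬝ᵥ redP M *ᵥ w = ∑ k, star (singleTensor k w) ⬝ᵥ M *ᵥ singleTensor k w := by
  simp only [redP, singleTensor, dotProduct, mulVec, Matrix.of_apply, Pi.star_apply,
    Fintype.sum_prod_type, Fin.sum_univ_two, Fin.isValue]
  norm_num
  ring

theorem eigenvalues_redP_le {G U : Matrix (Fin 2 × Fin 2) (Fin 2 × Fin 2) ℂ}
    (hG : G.IsHermitian) (hU : U * Uᴴ = 1) (hp : (redP (U * G * Uᴴ)).IsHermitian)
    (j : Fin 2) (m : ℝ) :
    hp.eigenvalues j ≤ ∑ i, max (hG.eigenvalues i - m) 0 + 2 * m := by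
  set w : Fin 2 → ℂ := ⇑(hp.eigenvectorBasis j)
  set v : Fin 2 → EuclideanSpace ℂ (Fin 2 × Fin 2) := fun k =>
    WithLp.toLp 2 (Uᴴ *ᵥ singleTensor k w)
  have hw : star w ⬝ᵥ w = 1 := by
    rw [← hp.eigenvectorBasis.inner_eq_one j, EuclideanSpace.inner_eq_star_dotProduct,
      dotProduct_comm]
  have hv : Orthonormal ℂ v := by
    rw [orthonormal_iff_ite]
    intro k l
    rw [EuclideanSpace.inner_toLp_toLp, dotProduct_comm, ← one_mulVec (Uᴴ *ᵥ singleTensor l w),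
      star_conjTranspose_mulVec_dotProduct, Matrix.mul_one, hU, one_mulVec,
      star_singleTensor_dotProduct, hw]
  calc hp.eigenvalues j = RCLike.re (star w ⬝ᵥ redP (U * G * Uᴴ) *ᵥ w) := hp.eigenvalues_eq j
    _ = ∑ k, RCLike.re (star ⇑(v k) ⬝ᵥ G *ᵥ ⇑(v k)) := by
        simp only [star_dotProduct_redP_mulVec, map_sum, v, star_conjTranspose_mulVec_dotProduct]
    _ ≤ _ := by simpa using hG.sum_re_dotProduct_mulVec_le hv m

/-- For a trace-1 Hermitian positive semidefinite 4×4 coherence matrix with eigenvalues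
`l1 ≥ l2 ≥ l3 ≥ l4 ≥ 0` and any global unitary `U`, the entropy of the reduced polarization
coherence matrix of `U G Uᴴ` is at least `f(l1 + l2)`: the locked entropy is bounded below. -/
theorem reduced_entropy_ge_locked_bound
    (G : Matrix (Fin 2 × Fin 2) (Fin 2 × Fin 2) ℂ) (hG : G.PosSemidef)
    (htr : G.trace = 1)
    (l1 l2 l3 l4 : ℝ) (h21 : l2 ≤ l1) (h32 : l3 ≤ l2) (h43 : l4 ≤ l3) (h4 : 0 ≤ l4)
    (heig : Finset.univ.val.map hG.isHermitian.eigenvalues =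
      ({l1, l2, l3, l4} : Multiset ℝ)) :
    ∀ U : Matrix (Fin 2 × Fin 2) (Fin 2 × Fin 2) ℂ, U * Uᴴ = 1 →
      ∀ hp : (redP (U * G * Uᴴ)).IsHermitian,
        fEnt (l1 + l2) ≤ entropy hp := by
  intro U hU hp
  have hsum : l1 + l2 + l3 + l4 = 1 := by
    have hmap := Fintype.sum_comp_eq_of_map_univ_eq heig id
    have htrace := hG.isHermitian.sum_eigenvalues_eq_re_trace
    simp only [id_eq, Multiset.insert_eq_cons, Multiset.map_cons, Multiset.map_singleton,
      Multiset.sum_cons, Multiset.sum_singleton, htr, RCLike.one_re] at hmap htrace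
    linarith
  have hbound (j : Fin 2) : hp.eigenvalues j ≤ l1 + l2 := by
    have := eigenvalues_redP_le hG.isHermitian hU hp j l2
    rw [Fintype.sum_comp_eq_of_map_univ_eq heig (fun t => max (t - l2) 0)] at this
    simp only [Multiset.insert_eq_cons, Multiset.map_cons, Multiset.map_singleton,
      Multiset.sum_cons, Multiset.sum_singleton, sub_nonneg, h21, h32, h43.trans h32,
      sup_of_le_left, sup_of_le_right, sub_self, max_self, tsub_le_iff_right, zero_add,
      add_zero] at this
    linarith
  have hredtr : (redP (U * G * Uᴴ)).trace = 1 := by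
    rw [trace_redP, trace_mul_cycle, mul_eq_one_comm.mp hU, Matrix.one_mul, htr]
  have hμ : hp.eigenvalues 0 + hp.eigenvalues 1 = 1 := by
    simpa [Fin.sum_univ_two, hredtr] using hp.sum_eigenvalues_eq_re_trace
  rw [entropy_eq_fEnt_of_trace_eq_one hp hredtr]
  exact fEnt_le_fEnt (by linarith) (hbound 0) (by linarith [hbound 1])
end

section
/- Let G be a 4×4 complex Hermitian positive semidefinite matrix indexed by (Fin 2) × (Fin 2) with trace 1 and rank at most 2. Then there exists a 4×4 unitary matrix U such that the reduced spatial coherence matrix of U G Uᴴ (entries ∑_i (U G Uᴴ) (k,i) (l,i)) has entropy 0, while the reduced polarization coherence matrix of U G Uᴴ (entries ∑_k (U G Uᴴ) (k,i) (k,j)) has entropy equal to the total entropy S(G) = −∑_j λ_j log₂ λ_j of G. That is, the entire entropy of a rank-2 field — no matter how high — can always be concentrated into a single degree of freedom, leaving the other free of statistical fluctuations. -/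
/-!
Diagonalise `G` by a unitary and relabel the eigenbasis so that the at most two nonzero
eigenvalues sit at the basis vectors `(0, 0)` and `(0, 1)`. Then `U G Uᴴ` is diagonal and
supported on spatial index `0`: its spatial reduction is `diag (1, 0)`, a pure state, while its
polarization reduction carries exactly the nonzero eigenvalues of `G`.
-/

open Matrix ComplexOrder

open Polynomial in
theorem Matrix.IsHermitian.entropy_eq_of_eq_diagonal {n : Type*} [Fintype n] [DecidableEq n]
    {M : Matrix n n ℂ} (hM : M.IsHermitian) {d : n → ℝ}
    (hd : M = diagonal fun i => (d i : ℂ)) :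
    entropy hM = -∑ i, d i * Real.logb 2 (d i) := by
  have hroots : Finset.univ.val.map (fun i => (hM.eigenvalues i : ℂ)) =
      Finset.univ.val.map (fun i => (d i : ℂ)) := by
    subst hd
    have := hM.roots_charpoly_eq_eigenvalues
    rw [charpoly_diagonal, roots_prod _ _ (by simp [Finset.prod_ne_zero_iff, X_sub_C_ne_zero])]
      at this
    simpa using this.symm
  have := congrArg (fun s => (s.map fun z : ℂ => z.re * Real.logb 2 z.re).sum) hroots
  simpa [entropy] using this

theorem Equiv.Perm.exists_comp_apply_eq_zero_of_not {α M : Type*} [Fintype α] [Zero M]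
    (f : α → M) (p : α → Prop) (h : Nat.card {x // f x ≠ 0} ≤ Nat.card {x // p x}) :
    ∃ σ : Equiv.Perm α, ∀ x, ¬ p x → f (σ x) = 0 := by
  classical
  obtain ⟨s, hsupp, -, hs⟩ := Finset.exists_subsuperset_card_eq (n := Nat.card {x // p x})
    (Finset.subset_univ {x | f x ≠ 0})
    (by rwa [← Fintype.card_subtype, ← Nat.card_eq_fintype_card])
    (by simpa using Finite.card_subtype_le p)
  let e : {x // p x} ≃ {x // x ∈ s} :=
    Fintype.equivOfCardEq (by rw [Fintype.card_coe, hs, Nat.card_eq_fintype_card])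
  refine ⟨e.extendSubtype, fun x hx => ?_⟩
  by_contra hf
  exact e.extendSubtype_not_mem x hx (hsupp (by simpa using hf))

theorem Matrix.IsHermitian.exists_unitary_conj_eq_diagonal_comp {𝕜 n : Type*} [RCLike 𝕜]
    [Fintype n] [DecidableEq n] {A : Matrix n n 𝕜} (hA : A.IsHermitian) (σ : Equiv.Perm n) :
    ∃ U : Matrix n n 𝕜, U * Uᴴ = 1 ∧
      U * A * Uᴴ = diagonal fun i => (hA.eigenvalues (σ i) : 𝕜) := by
  set V : Matrix n n 𝕜 := (hA.eigenvectorUnitary : Matrix n n 𝕜)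
  have hconj (X : Matrix n n 𝕜) : (star V).submatrix σ id * X * ((star V).submatrix σ id)ᴴ =
      (star V * X * V).submatrix σ σ := by
    rw [conjTranspose_submatrix, ← star_eq_conjTranspose, star_star,
      submatrix_mul _ _ σ id σ Function.bijective_id,
      submatrix_mul (star V) X σ id id Function.bijective_id, submatrix_id_id]
  refine ⟨(star V).submatrix σ id, ?_, ?_⟩
  · have hone := hconj 1
    rwa [Matrix.mul_one, Matrix.mul_one, Unitary.star_mul_self_of_mem hA.eigenvectorUnitary.2,
      submatrix_one_equiv] at hone
  · have hdiag := hA.conjStarAlgAut_star_eigenvectorUnitary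
    rw [Unitary.conjStarAlgAut_apply, Unitary.coe_star, star_star] at hdiag
    rw [hconj, hdiag, submatrix_diagonal_equiv]
    rfl

theorem redS_diagonal (d : Fin 2 × Fin 2 → ℂ) :
    redS (diagonal d) = diagonal fun k => ∑ i, d (k, i) := by
  ext k l
  by_cases h : k = l <;> simp [redS, diagonal_apply, h]

theorem redP_diagonal (d : Fin 2 × Fin 2 → ℂ) :
    redP (diagonal d) = diagonal fun i => ∑ k, d (k, i) := by
  ext i j
  by_cases h : i = j <;> simp [redP, diagonal_apply, h]

/-- For a trace-1 Hermitian positive semidefinite 4×4 coherence matrix of rank at most 2,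
there is a global unitary `U` such that the reduced spatial coherence matrix of `U G Uᴴ` has
entropy 0 while the reduced polarization coherence matrix carries the entire entropy `S(G)`:
the entropy of a rank-2 field can always be concentrated into a single degree of freedom. -/
theorem rank_two_entropy_concentration
    (G : Matrix (Fin 2 × Fin 2) (Fin 2 × Fin 2) ℂ) (hG : G.PosSemidef)
    (htr : G.trace = 1) (hrank : G.rank ≤ 2) :
    ∃ U : Matrix (Fin 2 × Fin 2) (Fin 2 × Fin 2) ℂ, U * Uᴴ = 1 ∧
      (∀ hs : (redS (U * G * Uᴴ)).IsHermitian, entropy hs = 0) ∧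
      (∀ hp : (redP (U * G * Uᴴ)).IsHermitian, entropy hp = entropy hG.isHermitian) := by
  set hA := hG.isHermitian
  have hcard :
      Nat.card {x // hA.eigenvalues x ≠ 0} ≤ Nat.card {x : Fin 2 × Fin 2 // x.1 = 0} := by
    rw [Nat.card_eq_fintype_card, ← hA.rank_eq_card_non_zero_eigs, Nat.card_eq_fintype_card]
    exact hrank.trans (by decide)
  obtain ⟨σ, hσ⟩ := Equiv.Perm.exists_comp_apply_eq_zero_of_not _ _ hcard
  obtain ⟨U, hU, hUGU⟩ := hA.exists_unitary_conj_eq_diagonal_comp σ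
  have hrow₀ : ∑ i, hA.eigenvalues (σ (0, i)) = 1 := by
    have htrace : ∑ x, hA.eigenvalues (σ x) = 1 := by
      rw [Equiv.sum_comp]
      have h := hA.trace_eq_sum_eigenvalues.symm.trans htr
      rw [← Complex.ofReal_inj]
      simpa using h
    simpa [Fintype.sum_prod_type, Fin.sum_univ_two, hσ] using htrace
  refine ⟨U, hU, fun hs => ?_, fun hp => ?_⟩
  · rw [hs.entropy_eq_of_eq_diagonal (d := fun k => ∑ i, hA.eigenvalues (σ (k, i)))
      (by rw [hUGU, redS_diagonal]; push_cast; rfl), Fin.sum_univ_two, hrow₀]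
    simp [hσ]
  · rw [hp.entropy_eq_of_eq_diagonal (d := fun i => hA.eigenvalues (σ (0, i)))
      (by rw [hUGU, redP_diagonal]; simp [Fin.sum_univ_two, hσ]), entropy,
      ← Equiv.sum_comp σ, Fintype.sum_prod_type, Fin.sum_univ_two]
    simp [hσ]
end
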